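/- Let P be an LPOD and let N be a Brewka answer set of P. Then there exists a unique three-valued interpretation M such that N = collapse(M) and M is a three-valued answer set of P. -/

import Mathlib

/-! Four truth values F < F* < T* < T. -/
inductive V4 : Type
  | F | Fs | Ts | T
  deriving DecidableEq, Repr

instance : Fintype V4 :=
  Fintype.ofList [V4.F, V4.Fs, V4.Ts, V4.T] (fun x => by cases x <;> simp)

namespace V4

def toNat : V4 → ℕ
  | F => 0
  | Fs => 1
  | Ts => 2
  | T => 3

theorem toNat_injective : Function.Injective toNat := by
  intro a b h
  cases a <;> cases b <;> simp_all [toNat]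

instance : LinearOrder V4 := LinearOrder.lift' toNat toNat_injective

instance : BoundedOrder V4 where
  top := T
  le_top a := by cases a <;> decide
  bot := F
  bot_le a := by cases a <;> decide

/-- Negation-as-failure: `not φ` is `T` if `φ ≤ F*`, else `F`. -/
def notv (a : V4) : V4 := if a ≤ Fs then T else F

/-- Ordered disjunction on truth values: `u × v = v` if `u = F*`, else `u`. -/
def times (a b : V4) : V4 := if a = Fs then b else a

end V4

variable {α : Type}

/-- A ground literal: an atom together with a polarity (`true` = the atom itself,
`false` = its strong negation). -/
structure Lit (α : Type) where
  atom : α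
  positive : Bool
  deriving DecidableEq

/-- A (four-valued) interpretation assigns a truth value to every literal.
Three-valued interpretations are the `solid` ones (no `T*` value). -/
abbrev Interp (α : Type) := Lit α → V4

/-- `I` is solid (equivalently, three-valued) if it assigns `T*` to no literal. -/
def solid (I : Interp α) : Prop := ∀ l, I l ≠ V4.Ts

/-- `I` is consistent: no atom has both the atom and its strong negation `T`. -/
def consistentI (I : Interp α) : Prop :=
  ∀ a : α, ¬ (I ⟨a, true⟩ = V4.T ∧ I ⟨a, false⟩ = V4.T)

/-- `I` takes values only in `{F, T}`. -/
def twoValued (I : Interp α) : Prop := ∀ l, I l = V4.F ∨ I l = V4.T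

/-- Value of the conjunction of a list of literals. -/
def evalConj (I : Interp α) (L : List (Lit α)) : V4 := (L.map I).foldr min V4.T

/-- Value of the conjunction `not B1 ∧ ⋯ ∧ not Bk`. -/
def evalNegs (I : Interp α) (L : List (Lit α)) : V4 :=
  (L.map (fun b => V4.notv (I b))).foldr min V4.T

/-- Value of the disjunction of a list of literals. -/
def evalDisj (I : Interp α) (L : List (Lit α)) : V4 := (L.map I).foldr max V4.F

/-- Value of an ordered disjunction of the given (nonempty) list of values.
(`F*` is a right identity for `×`, so the fold computes `v1 × ⋯ × vn`.) -/
def evalOD (vs : List V4) : V4 := vs.foldr V4.times V4.Fs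

/-- Pointwise `≤` on interpretations. -/
def interpLE (I J : Interp α) : Prop := ∀ l, I l ≤ J l

/-- The four-valued relation `⪯`: `u ⪯ v` iff `u = v` or `u ≺ v`, where
`F ≺ F*`, `F ≺ T*`, `F ≺ T` and `T* ≺ T`.  On three-valued (solid)
interpretations it restricts to the ordering generated by `F ≺ F*`, `F ≺ T`. -/
def preceq (u v : V4) : Prop :=
  u = v ∨ (u = V4.F ∧ v ≠ V4.F) ∨ (u = V4.Ts ∧ v = V4.T)

/-- Pointwise `⪯` on interpretations. -/
def interpPreceq (I J : Interp α) : Prop := ∀ l, preceq (I l) (J l)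

/-- The set of literals that are `T` in `I`. -/
def collapse (I : Interp α) : Set (Lit α) := { l | I l = V4.T }

/-! ### LPOD rules -/

/-- An LPOD rule `C1 × ⋯ × Cn ← A1,…,Am, not B1,…,not Bk` with head
`c1 :: cs` (so the head is nonempty). -/
structure Rule (α : Type) where
  c1 : Lit α
  cs : List (Lit α)
  pos : List (Lit α)
  neg : List (Lit α)

def Rule.headList (R : Rule α) : List (Lit α) := R.c1 :: R.cs

def Rule.headVal (R : Rule α) (I : Interp α) : V4 := evalOD (R.headList.map I)

def Rule.bodyVal (R : Rule α) (I : Interp α) : V4 :=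
  min (evalConj I R.pos) (evalNegs I R.neg)

/-- `I` satisfies the rule `R` (the rule evaluates to `T`). -/
def ruleSat (I : Interp α) (R : Rule α) : Prop := R.bodyVal I ≤ R.headVal I

/-- `I` is a model of the LPOD `P`. -/
def isModel (I : Interp α) (P : Set (Rule α)) : Prop := ∀ R ∈ P, ruleSat I R

/-! ### The ×-reduct of an LPOD -/

/-- A reduct rule `C ← [F*,] A1,…,Am`; `fstar` records whether the constant `F*`
occurs in the body. -/
structure RedRule (α : Type) where
  head : Lit α
  pos : List (Lit α)
  fstar : Bool

def RedRule.bodyVal (r : RedRule α) (I : Interp α) : V4 :=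
  min (if r.fstar then V4.Fs else V4.T) (evalConj I r.pos)

def redSat (I : Interp α) (r : RedRule α) : Prop := r.bodyVal I ≤ I r.head

def redModel (I : Interp α) (Q : Set (RedRule α)) : Prop := ∀ r ∈ Q, redSat I r

/-- Reduct rules generated by a head `C1,…,Cn`: rules `Cj ← F*, body` for
`j < r` and `Cr ← body`, where `r` is the least index with
`I C1 = ⋯ = I C_{r-1} = F*` and (`r = n` or `I Cr ≠ F*`). -/
def xredHead (I : Interp α) (body : List (Lit α)) : List (Lit α) → List (RedRule α)
  | [] => []
  | [c] => [⟨c, body, false⟩]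
  | c :: c' :: rest =>
    if I c = V4.Fs then ⟨c, body, true⟩ :: xredHead I body (c' :: rest)
    else [⟨c, body, false⟩]

/-- The ×-reduct of a rule w.r.t. `I`. -/
def xredRule (I : Interp α) (R : Rule α) : List (RedRule α) :=
  if ∃ b ∈ R.neg, I b = V4.T then [] else xredHead I R.pos R.headList

/-- The ×-reduct of an LPOD w.r.t. `I`. -/
def xreduct (I : Interp α) (P : Set (Rule α)) : Set (RedRule α) :=
  { r | ∃ R ∈ P, r ∈ xredRule I R }

/-- `M` is a three-valued answer set of the LPOD `P`: a consistent three-valued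
interpretation that is the `≤`-least (three-valued) model of `P^M_×`. -/
def threeAnswerSet (P : Set (Rule α)) (M : Interp α) : Prop :=
  solid M ∧ consistentI M ∧ redModel M (xreduct M P) ∧
  ∀ N : Interp α, solid N → redModel N (xreduct M P) → interpLE M N

/-! ### Two-valued notions: Brewka answer sets and GL answer sets -/

/-- A set of literals is consistent if it contains no complementary pair. -/
def twoConsistent (N : Set (Lit α)) : Prop :=
  ∀ a : α, ¬ (Lit.mk a true ∈ N ∧ Lit.mk a false ∈ N)

/-- `N` is a (two-valued) Brewka-model of the LPOD `P`. -/
def brewkaModel (N : Set (Lit α)) (P : Set (Rule α)) : Prop :=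
  ∀ R ∈ P, (∀ a ∈ R.pos, a ∈ N) → (∀ b ∈ R.neg, b ∉ N) → ∃ c ∈ R.headList, c ∈ N

/-- A positive rule `C ← A1,…,Am`. -/
structure PosRule (α : Type) where
  head : Lit α
  pos : List (Lit α)

/-- `N` is a two-valued model of a positive program. -/
def posModel (N : Set (Lit α)) (Q : Set (PosRule α)) : Prop :=
  ∀ r ∈ Q, (∀ a ∈ r.pos, a ∈ N) → r.head ∈ N

/-- The Brewka ×-reduct of an LPOD w.r.t. a set of literals `N`:
`Ci ← A1,…,Am` whenever `Ci ∈ N` and `N ∩ {C1,…,C_{i-1},B1,…,Bk} = ∅`. -/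
def brewkaReduct (N : Set (Lit α)) (P : Set (Rule α)) : Set (PosRule α) :=
  { r | ∃ R ∈ P, ∃ l1 l2 : List (Lit α),
      R.headList = l1 ++ r.head :: l2 ∧ r.pos = R.pos ∧ r.head ∈ N ∧
      (∀ c ∈ l1, c ∉ N) ∧ (∀ b ∈ R.neg, b ∉ N) }

/-- `N` is a Brewka answer set of the LPOD `P`. -/
def brewkaAnswerSet (P : Set (Rule α)) (N : Set (Lit α)) : Prop :=
  twoConsistent N ∧ brewkaModel N P ∧ posModel N (brewkaReduct N P) ∧
  ∀ N', posModel N' (brewkaReduct N P) → N ⊆ N'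

/-- The Gelfond–Lifschitz reduct of an extended logic program (an LPOD all
of whose rule heads are single literals) w.r.t. a set of literals `N`. -/
def glReduct (P : Set (Rule α)) (N : Set (Lit α)) : Set (PosRule α) :=
  { r | ∃ R ∈ P, (∀ b ∈ R.neg, b ∉ N) ∧ r.head = R.c1 ∧ r.pos = R.pos }

/-- `N` is a standard answer set of the extended logic program `P`: a consistent
set of literals that is the least model of `P^N`. -/
def stdAnswerSet (P : Set (Rule α)) (N : Set (Lit α)) : Prop :=
  twoConsistent N ∧ posModel N (glReduct P N) ∧
  ∀ N', posModel N' (glReduct P N) → N ⊆ N'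

/-! ### DLPODs -/

/-- A DLPOD rule `𝒞1 × ⋯ × 𝒞n ← A1,…,Am, not B1,…,not Bk`, where each `𝒞i`
is a disjunction of literals; the head is `c1 :: cs` (nonempty). -/
structure DRule (α : Type) where
  c1 : List (Lit α)
  cs : List (List (Lit α))
  pos : List (Lit α)
  neg : List (Lit α)

def DRule.headList (R : DRule α) : List (List (Lit α)) := R.c1 :: R.cs

def DRule.headVal (R : DRule α) (I : Interp α) : V4 :=
  evalOD (R.headList.map (evalDisj I))

def DRule.bodyVal (R : DRule α) (I : Interp α) : V4 :=
  min (evalConj I R.pos) (evalNegs I R.neg)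

def dRuleSat (I : Interp α) (R : DRule α) : Prop := R.bodyVal I ≤ R.headVal I

def isDModel (I : Interp α) (P : Set (DRule α)) : Prop := ∀ R ∈ P, dRuleSat I R

/-- A disjunctive reduct rule `𝒞 ← [F*,] A1,…,Am`. -/
structure DRedRule (α : Type) where
  head : List (Lit α)
  pos : List (Lit α)
  fstar : Bool

def DRedRule.bodyVal (r : DRedRule α) (I : Interp α) : V4 :=
  min (if r.fstar then V4.Fs else V4.T) (evalConj I r.pos)

def dredSat (I : Interp α) (r : DRedRule α) : Prop := r.bodyVal I ≤ evalDisj I r.head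

def dredModel (I : Interp α) (Q : Set (DRedRule α)) : Prop := ∀ r ∈ Q, dredSat I r

def dxredHead (I : Interp α) (body : List (Lit α)) :
    List (List (Lit α)) → List (DRedRule α)
  | [] => []
  | [c] => [⟨c, body, false⟩]
  | c :: c' :: rest =>
    if evalDisj I c = V4.Fs then ⟨c, body, true⟩ :: dxredHead I body (c' :: rest)
    else [⟨c, body, false⟩]

/-- The ×-reduct of a DLPOD rule w.r.t. `I`. -/
def dxredRule (I : Interp α) (R : DRule α) : List (DRedRule α) :=
  if ∃ b ∈ R.neg, I b = V4.T then [] else dxredHead I R.pos R.headList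

/-- The ×-reduct of a DLPOD w.r.t. `I`. -/
def dxreduct (I : Interp α) (P : Set (DRule α)) : Set (DRedRule α) :=
  { r | ∃ R ∈ P, r ∈ dxredRule I R }

/-- `M` is an answer set of the DLPOD `P`: a consistent three-valued
interpretation that is a `≤`-minimal (three-valued) model of `P^M_×`. -/
def dAnswerSet (P : Set (DRule α)) (M : Interp α) : Prop :=
  solid M ∧ consistentI M ∧ dredModel M (dxreduct M P) ∧
  ∀ N : Interp α, solid N → dredModel N (dxreduct M P) → interpLE N M → N = M

/-- A positive disjunctive rule `C1 ∨ ⋯ ∨ Cq ← A1,…,Am`. -/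
structure DPosRule (α : Type) where
  head : List (Lit α)
  pos : List (Lit α)

/-- `N` is a two-valued model of a positive disjunctive program. -/
def dposModel (N : Set (Lit α)) (Q : Set (DPosRule α)) : Prop :=
  ∀ r ∈ Q, (∀ a ∈ r.pos, a ∈ N) → ∃ c ∈ r.head, c ∈ N

/-- The Gelfond–Lifschitz reduct of a disjunctive extended logic program (a
DLPOD all of whose rule heads are single disjunctions). -/
def glDReduct (P : Set (DRule α)) (N : Set (Lit α)) : Set (DPosRule α) :=
  { r | ∃ R ∈ P, (∀ b ∈ R.neg, b ∉ N) ∧ r.head = R.c1 ∧ r.pos = R.pos }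

/-- `N` is a standard disjunctive answer set: a consistent set of literals that
is a minimal two-valued model of `P^N`. -/
def stdDAnswerSet (P : Set (DRule α)) (N : Set (Lit α)) : Prop :=
  twoConsistent N ∧ dposModel N (glDReduct P N) ∧
  ∀ N', dposModel N' (glDReduct P N) → N' ⊆ N → N' = N

/-!
A three-valued answer set `M` with `collapse M = N` is forced: it is `T` on `N`, `F*` on the
literals outside `N` that are *derivable* relative to `N` (heads `Cᵢ` of rules whose negative
body misses `N`, whose positive body is in `N` or derivable, and whose earlier options
`C₁, …, Cᵢ₋₁` are derivable and outside `N`), and `F` elsewhere. Derivable literals are at least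
`F*` in every model of the reduct, by induction on derivations; together with Brewka-minimality
of `N` this makes the forced interpretation the least model of its reduct. Conversely it is a
model of the reduct of any `M` with `collapse M = N` as soon as `N` is closed under the reduct
rules without `F*` in the body: for existence this is Brewka-modelhood of `N`, for uniqueness
it is modelhood of `M`.
-/

namespace V4

lemma Fs_le_T : Fs ≤ T := by decide

lemma T_le_iff {x : V4} : T ≤ x ↔ x = T := by cases x <;> decide

lemma eq_Fs_of_Fs_le {x : V4} (h : Fs ≤ x) (hTs : x ≠ Ts) (hT : x ≠ T) : x = Fs := by
  revert h hTs hT; cases x <;> decide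

lemma le_of_le_Fs {x y : V4} (hx : x ≤ Fs) (hy : Fs ≤ x → Fs ≤ y) : x ≤ y := by
  cases x <;> cases y <;> revert hx hy <;> decide

end V4

lemma le_evalConj_iff {I : Interp α} {L : List (Lit α)} {v : V4} :
    v ≤ evalConj I L ↔ ∀ a ∈ L, v ≤ I a := by
  induction L with
  | nil => exact iff_of_true le_top (by simp)
  | cons a L ih =>
    simp only [evalConj, List.map_cons, List.foldr_cons, le_min_iff, List.forall_mem_cons] at ih ⊢
    rw [ih]

lemma evalConj_le_of_mem {I : Interp α} {L : List (Lit α)} {a : Lit α} (ha : a ∈ L) :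
    evalConj I L ≤ I a :=
  le_evalConj_iff.1 le_rfl a ha

namespace RedRule

lemma T_le_bodyVal_iff {r : RedRule α} {I : Interp α} :
    V4.T ≤ r.bodyVal I ↔ r.fstar = false ∧ ∀ a ∈ r.pos, I a = V4.T := by
  unfold bodyVal
  cases r.fstar <;> simp [le_evalConj_iff, V4.T_le_iff]

lemma Fs_le_bodyVal_iff {r : RedRule α} {I : Interp α} :
    V4.Fs ≤ r.bodyVal I ↔ ∀ a ∈ r.pos, V4.Fs ≤ I a := by
  unfold bodyVal
  cases r.fstar <;> simp [le_evalConj_iff, V4.Fs_le_T]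

end RedRule

lemma redSat.head_eq_T {I : Interp α} {r : RedRule α} (h : redSat I r)
    (hf : r.fstar = false) (hpos : ∀ a ∈ r.pos, I a = V4.T) : I r.head = V4.T :=
  top_le_iff.1 (le_trans (RedRule.T_le_bodyVal_iff.2 ⟨hf, hpos⟩) h)

lemma redSat.Fs_le_head {I : Interp α} {r : RedRule α} (h : redSat I r)
    (hpos : ∀ a ∈ r.pos, V4.Fs ≤ I a) : V4.Fs ≤ I r.head :=
  le_trans (RedRule.Fs_le_bodyVal_iff.2 hpos) h

lemma exists_mem_xredHead_of_prefix (I : Interp α) (body : List (Lit α)) (c : Lit α) (l2 : List (Lit α)) :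
    ∀ l1 : List (Lit α), (∀ k ∈ l1, I k = V4.Fs) →
      ∃ r ∈ xredHead I body (l1 ++ c :: l2), r.head = c ∧ r.pos = body ∧
        (I c ≠ V4.Fs → r.fstar = false)
  | [], _ => by
    cases l2 with
    | nil => exact ⟨⟨c, body, false⟩, by simp [xredHead], rfl, rfl, fun _ => rfl⟩
    | cons c' t =>
      by_cases h : I c = V4.Fs
      · exact ⟨⟨c, body, true⟩, by simp [xredHead, h], rfl, rfl, absurd h⟩
      · exact ⟨⟨c, body, false⟩, by simp [xredHead, h], rfl, rfl, fun _ => rfl⟩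
  | k :: t, hpre => by
    obtain ⟨r, hr, hrc⟩ := exists_mem_xredHead_of_prefix I body c l2 t fun x hx => hpre x (by simp [hx])
    refine ⟨r, ?_, hrc⟩
    obtain ⟨x, xs, hte⟩ : ∃ x xs, t ++ c :: l2 = x :: xs := List.exists_cons_of_ne_nil (by simp)
    rw [hte] at hr
    simpa [List.cons_append, hte, xredHead, hpre k (by simp)] using Or.inr hr

lemma exists_of_mem_xredHead (I : Interp α) (body : List (Lit α)) :
    ∀ (hs : List (Lit α)) (r : RedRule α), r ∈ xredHead I body hs →
      r.pos = body ∧ ∃ l1 l2, hs = l1 ++ r.head :: l2 ∧ (∀ k ∈ l1, I k = V4.Fs) ∧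
        (r.fstar = false → I r.head ≠ V4.Fs ∨ l2 = [])
  | [], r, hr => by simp [xredHead] at hr
  | [c], r, hr => by
    obtain rfl : r = ⟨c, body, false⟩ := by simpa [xredHead] using hr
    exact ⟨rfl, [], [], rfl, by simp, fun _ => Or.inr rfl⟩
  | c :: c' :: rest, r, hr => by
    by_cases h : I c = V4.Fs
    · simp only [xredHead, h, if_true, List.mem_cons] at hr
      rcases hr with rfl | hr
      · exact ⟨rfl, [], c' :: rest, rfl, by simp, nofun⟩
      · obtain ⟨hpos, l1, l2, heq, hFs, hf⟩ := exists_of_mem_xredHead I body _ r hr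
        refine ⟨hpos, c :: l1, l2, by rw [heq, List.cons_append], ?_, hf⟩
        simpa [h] using hFs
    · simp only [xredHead, h, if_false, List.mem_singleton] at hr
      subst hr
      exact ⟨rfl, [], c' :: rest, rfl, by simp, fun _ => Or.inl h⟩

lemma exists_mem_xreduct_of_prefix {I : Interp α} {P : Set (Rule α)} {R : Rule α} (hR : R ∈ P)
    (hneg : ∀ b ∈ R.neg, I b ≠ V4.T) {l1 l2 : List (Lit α)} {c : Lit α}
    (hhl : R.headList = l1 ++ c :: l2) (hl1 : ∀ k ∈ l1, I k = V4.Fs) :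
    ∃ r ∈ xreduct I P, r.head = c ∧ r.pos = R.pos ∧ (I c ≠ V4.Fs → r.fstar = false) := by
  obtain ⟨r, hr, hrc⟩ := exists_mem_xredHead_of_prefix I R.pos c l2 l1 hl1
  have hkeep : ¬ ∃ b ∈ R.neg, I b = V4.T := fun ⟨b, hb, hbT⟩ => hneg b hb hbT
  exact ⟨r, ⟨R, hR, by rwa [xredRule, if_neg hkeep, hhl]⟩, hrc⟩

lemma exists_of_mem_xreduct {I : Interp α} {P : Set (Rule α)} {r : RedRule α}
    (hr : r ∈ xreduct I P) :
    ∃ R ∈ P, (∀ b ∈ R.neg, I b ≠ V4.T) ∧ r.pos = R.pos ∧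
      ∃ l1 l2, R.headList = l1 ++ r.head :: l2 ∧ (∀ k ∈ l1, I k = V4.Fs) ∧
        (r.fstar = false → I r.head ≠ V4.Fs ∨ l2 = []) := by
  obtain ⟨R, hR, hr⟩ := hr
  by_cases hdrop : ∃ b ∈ R.neg, I b = V4.T
  · simp [xredRule, hdrop] at hr
  · rw [xredRule, if_neg hdrop] at hr
    exact ⟨R, hR, fun b hb hbT => hdrop ⟨b, hb, hbT⟩, exists_of_mem_xredHead I R.pos _ r hr⟩

/-- A derivation of `c` records why every three-valued answer set with collapse `N`
gives `c` a value at least `F*`. -/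
inductive Derivable (P : Set (Rule α)) (N : Set (Lit α)) : Lit α → Prop
  | intro (R : Rule α) (l1 l2 : List (Lit α)) (c : Lit α)
      (hR : R ∈ P) (hneg : ∀ b ∈ R.neg, b ∉ N)
      (hpos : ∀ a ∈ R.pos, a ∉ N → Derivable P N a)
      (hhl : R.headList = l1 ++ c :: l2)
      (hl1N : ∀ k ∈ l1, k ∉ N)
      (hl1D : ∀ k ∈ l1, Derivable P N k) : Derivable P N c

namespace Derivable

variable {P : Set (Rule α)} {N : Set (Lit α)} {R : Rule α}

lemma of_mem_prefix (hR : R ∈ P) (hneg : ∀ b ∈ R.neg, b ∉ N)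
    (hpos : ∀ a ∈ R.pos, a ∉ N → Derivable P N a) {l1 : List (Lit α)} :
    ∀ {l2 : List (Lit α)}, R.headList = l1 ++ l2 → (∀ k ∈ l1, k ∉ N) →
      ∀ k ∈ l1, Derivable P N k := by
  induction l1 using List.reverseRecOn with
  | nil => simp
  | append_singleton s x ih =>
    intro l2 hhl hl1
    have hhl' : R.headList = s ++ x :: l2 := by simpa using hhl
    have hs := ih hhl' fun k hk => hl1 k (by simp [hk])
    intro k hk
    rcases List.mem_append.1 hk with hk | hk
    · exact hs k hk
    · obtain rfl := List.mem_singleton.1 hk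
      exact intro R s l2 k hR hneg hpos hhl' (fun k hk => hl1 k (by simp [hk])) hs

lemma of_prefix (hR : R ∈ P) (hneg : ∀ b ∈ R.neg, b ∉ N)
    (hpos : ∀ a ∈ R.pos, a ∉ N → Derivable P N a) {l1 l2 : List (Lit α)} {c : Lit α}
    (hhl : R.headList = l1 ++ c :: l2) (hl1 : ∀ k ∈ l1, k ∉ N) : Derivable P N c :=
  intro R l1 l2 c hR hneg hpos hhl hl1 (of_mem_prefix hR hneg hpos hhl hl1)

/-- `hIFs` lets the reduct's walk along a rule head pass the options preceding a derivable
literal. -/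
lemma Fs_le {I J : Interp α} (hI : collapse I ⊆ N) (hJN : N ⊆ collapse J)
    (hJ : redModel J (xreduct I P))
    (hIFs : ∀ k ∉ N, Derivable P N k → V4.Fs ≤ J k → I k = V4.Fs)
    {l : Lit α} (hl : Derivable P N l) : V4.Fs ≤ J l := by
  induction hl with
  | intro R l1 l2 c hR hneg _ hhl hl1N hl1D ihpos ihl1 =>
    obtain ⟨r, hr, rfl, hrpos, -⟩ := exists_mem_xreduct_of_prefix (I := I) hR
      (fun b hb hbT => hneg b hb (hI hbT)) hhl
      (fun k hk => hIFs k (hl1N k hk) (hl1D k hk) (ihl1 k hk))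
    refine (hJ r hr).Fs_le_head fun a ha => ?_
    rw [hrpos] at ha
    by_cases haN : a ∈ N
    · exact (hJN haN).symm ▸ V4.Fs_le_T
    · exact ihpos a ha haN

end Derivable

open Classical in
/-- The interpretation forced on a three-valued answer set with collapse `N`. -/
noncomputable def forcedInterp (P : Set (Rule α)) (N : Set (Lit α)) : Interp α :=
  fun l => if l ∈ N then V4.T else if Derivable P N l then V4.Fs else V4.F

section forcedInterp

variable {P : Set (Rule α)} {N : Set (Lit α)}

lemma forcedInterp_eq_T_iff {l : Lit α} : forcedInterp P N l = V4.T ↔ l ∈ N := by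
  unfold forcedInterp; split_ifs <;> simp_all

lemma collapse_forcedInterp : collapse (forcedInterp P N) = N :=
  Set.ext fun _ => forcedInterp_eq_T_iff

lemma forcedInterp_eq_Fs_iff {l : Lit α} :
    forcedInterp P N l = V4.Fs ↔ l ∉ N ∧ Derivable P N l := by
  unfold forcedInterp; split_ifs <;> simp_all

lemma Fs_le_forcedInterp_iff {l : Lit α} :
    V4.Fs ≤ forcedInterp P N l ↔ l ∈ N ∨ Derivable P N l := by
  unfold forcedInterp; split_ifs <;> simp_all <;> decide

lemma forcedInterp_le_Fs {l : Lit α} (hl : l ∉ N) : forcedInterp P N l ≤ V4.Fs := by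
  simp only [forcedInterp, hl, if_false]; split_ifs <;> decide

lemma solid_forcedInterp : solid (forcedInterp P N) := by
  intro l; unfold forcedInterp; split_ifs <;> decide

lemma forcedInterp_le {J : Interp α} (hJN : N ⊆ collapse J)
    (hJD : ∀ l, Derivable P N l → V4.Fs ≤ J l) : interpLE (forcedInterp P N) J := by
  intro l
  unfold forcedInterp
  split_ifs with hN hD
  · exact (hJN hN).ge
  · exact hJD l hD
  · exact bot_le

end forcedInterp

/-- `N` is closed under the rules of `Q` that have no `F*` in their body. -/
def PlainClosed (N : Set (Lit α)) (Q : Set (RedRule α)) : Prop :=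
  ∀ r ∈ Q, r.fstar = false → (∀ a ∈ r.pos, a ∈ N) → r.head ∈ N

section

variable {P : Set (Rule α)} {N : Set (Lit α)}

lemma plainClosed_of_redModel {M : Interp α} {Q : Set (RedRule α)} (hM : redModel M Q) :
    PlainClosed (collapse M) Q :=
  fun r hr hf hpos => (hM r hr).head_eq_T hf hpos

lemma redModel_forcedInterp {I : Interp α} (hI : N ⊆ collapse I)
    (hclosed : PlainClosed N (xreduct I P)) : redModel (forcedInterp P N) (xreduct I P) := by
  intro r hr
  obtain ⟨R, hR, hneg, hrpos, l1, l2, hhl, hl1, -⟩ := exists_of_mem_xreduct hr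
  by_cases hplain : r.fstar = false ∧ ∀ a ∈ r.pos, a ∈ N
  · rw [redSat, forcedInterp_eq_T_iff.2 (hclosed r hr hplain.1 hplain.2)]
    exact le_top
  have hbody : r.bodyVal (forcedInterp P N) ≤ V4.Fs := by
    by_cases hf : r.fstar = false
    · obtain ⟨a, ha, haN⟩ : ∃ a ∈ r.pos, a ∉ N := by simpa [hf] using hplain
      exact (min_le_right _ _).trans ((evalConj_le_of_mem ha).trans (forcedInterp_le_Fs haN))
    · simp [RedRule.bodyVal, hf]
  refine V4.le_of_le_Fs hbody fun hFs => Fs_le_forcedInterp_iff.2 (Or.inr ?_)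
  refine Derivable.of_prefix hR (fun b hb hbN => hneg b hb (hI hbN)) (fun a ha haN => ?_) hhl
    (fun k hk hkN => absurd ((hI hkN : I k = V4.T).symm.trans (hl1 k hk)) (by decide))
  rw [← hrpos] at ha
  exact ((Fs_le_forcedInterp_iff.1 (RedRule.Fs_le_bodyVal_iff.1 hFs a ha)).resolve_left haN)

lemma plainClosed_forcedInterp (hN : brewkaModel N P) :
    PlainClosed N (xreduct (forcedInterp P N) P) := by
  intro r hr hf hpos
  obtain ⟨R, hR, hneg, hrpos, l1, l2, hhl, hl1, hlast⟩ := exists_of_mem_xreduct hr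
  have hnegN : ∀ b ∈ R.neg, b ∉ N := fun b hb hbN => hneg b hb (forcedInterp_eq_T_iff.2 hbN)
  have hl1N : ∀ k ∈ l1, k ∉ N := fun k hk => (forcedInterp_eq_Fs_iff.1 (hl1 k hk)).1
  rw [hrpos] at hpos
  by_contra hhead
  have hder := Derivable.of_prefix hR hnegN (fun a ha haN => absurd (hpos a ha) haN) hhl hl1N
  obtain rfl : l2 = [] :=
    (hlast hf).resolve_left (not_not.2 (forcedInterp_eq_Fs_iff.2 ⟨hhead, hder⟩))
  obtain ⟨c, hc, hcN⟩ := hN R hR hpos hnegN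
  rw [hhl] at hc
  rcases List.mem_append.1 hc with hc | hc
  · exact hl1N c hc hcN
  · exact hhead (List.mem_singleton.1 hc ▸ hcN)

/-- Brewka-minimality of `N`: the literals of `N` true in `J` form a model of the Brewka
reduct, because each of its rules has a counterpart without `F*` in the ×-reduct. -/
lemma subset_collapse_of_redModel (hleast : ∀ N', posModel N' (brewkaReduct N P) → N ⊆ N')
    {J : Interp α} (hJ : redModel J (xreduct (forcedInterp P N) P)) : N ⊆ collapse J := by
  suffices hmodel : posModel {l | l ∈ N ∧ J l = V4.T} (brewkaReduct N P) from
    fun l hl => (hleast _ hmodel hl).2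
  rintro pr ⟨R, hR, l1, l2, hhl, hprpos, hheadN, hl1N, hnegN⟩ hbody
  rw [hprpos] at hbody
  have hposN : ∀ a ∈ R.pos, a ∉ N → Derivable P N a := fun a ha haN =>
    absurd (hbody a ha).1 haN
  have hl1D := Derivable.of_mem_prefix hR hnegN hposN hhl hl1N
  obtain ⟨r, hr, hrhead, hrpos, hrf⟩ := exists_mem_xreduct_of_prefix hR
    (fun b hb hbT => hnegN b hb (forcedInterp_eq_T_iff.1 hbT)) hhl
    (fun k hk => forcedInterp_eq_Fs_iff.2 ⟨hl1N k hk, hl1D k hk⟩)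
  have hheadT : forcedInterp P N pr.head ≠ V4.Fs := by
    rw [forcedInterp_eq_T_iff.2 hheadN]; decide
  refine ⟨hheadN, hrhead ▸ (hJ r hr).head_eq_T (hrf hheadT) fun a ha => ?_⟩
  rw [hrpos] at ha
  exact (hbody a ha).2

lemma threeAnswerSet_forcedInterp (h : brewkaAnswerSet P N) :
    threeAnswerSet P (forcedInterp P N) := by
  obtain ⟨hcons, hmodel, -, hleast⟩ := h
  refine ⟨solid_forcedInterp, fun a ha => hcons a ⟨forcedInterp_eq_T_iff.1 ha.1,
    forcedInterp_eq_T_iff.1 ha.2⟩, redModel_forcedInterp collapse_forcedInterp.ge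
    (plainClosed_forcedInterp hmodel), fun J _ hJ => ?_⟩
  have hJN := subset_collapse_of_redModel hleast hJ
  exact forcedInterp_le hJN fun l hl => Derivable.Fs_le collapse_forcedInterp.le hJN hJ
    (fun k hk hkD _ => forcedInterp_eq_Fs_iff.2 ⟨hk, hkD⟩) hl

end

lemma threeAnswerSet.eq_forcedInterp {P : Set (Rule α)} {M : Interp α}
    (hM : threeAnswerSet P M) : M = forcedInterp P (collapse M) := by
  obtain ⟨hsolid, -, hmodel, hleast⟩ := hM
  have hle : interpLE (forcedInterp P (collapse M)) M :=
    forcedInterp_le subset_rfl fun l hl => Derivable.Fs_le subset_rfl subset_rfl hmodel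
      (fun k hk _ hFs => V4.eq_Fs_of_Fs_le hFs (hsolid k) hk) hl
  have hge : interpLE M (forcedInterp P (collapse M)) :=
    hleast _ solid_forcedInterp (redModel_forcedInterp subset_rfl (plainClosed_of_redModel hmodel))
  exact funext fun l => le_antisymm (hge l) (hle l)

/-- For every Brewka answer set `N` of an LPOD `P`, there is a
unique three-valued interpretation `M` with `collapse M = N` that is a
three-valued answer set of `P`. -/
theorem brewka_exists_unique_threeAnswerSet {α : Type} (P : Set (Rule α))
    (N : Set (Lit α)) (h : brewkaAnswerSet P N) :
    ∃! M : Interp α, collapse M = N ∧ threeAnswerSet P M := by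
  refine ⟨forcedInterp P N, ⟨collapse_forcedInterp, threeAnswerSet_forcedInterp h⟩, ?_⟩
  rintro M ⟨rfl, hM⟩
  exact hM.eq_forcedInterp
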